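/- arXiv:2410.19674 — 3 statements merged into one kernel-verified Lean document; each statement's English description precedes it below -/
import Mathlib

section
/- For positive integers n and m, the join of the friendship graph F_n with the empty graph \overline{K_m} satisfies χ_ld(F_n + \overline{K_m}) = 2n + 2. -/
open Finset

open Classical in
/-- The weight of a vertex: sum of labels of its neighbors. -/
noncomputable def ldWeight {V : Type*} (G : SimpleGraph V) [Fintype V] (f : V → ℕ) (v : V) : ℕ :=
  ∑ x ∈ Finset.univ, if G.Adj v x then f x else 0

/-- `f` is a local distance antimagic labeling of `G`: a bijection onto `{1,…,|V|}`
with adjacent vertices getting distinct weights. -/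
def IsLDAL {V : Type*} (G : SimpleGraph V) [Fintype V] (f : V → ℕ) : Prop :=
  Set.BijOn f Set.univ (Set.Icc 1 (Fintype.card V)) ∧
    ∀ ⦃u v : V⦄, G.Adj u v → ldWeight G f u ≠ ldWeight G f v

/-- The local distance antimagic chromatic number: minimum number of distinct weights. -/
noncomputable def chiLD {V : Type*} (G : SimpleGraph V) [Fintype V] : ℕ :=
  sInf {k | ∃ f : V → ℕ, IsLDAL G f ∧ (Finset.univ.image (ldWeight G f)).card = k}

/-- The join `G + H` of two graphs. -/
def graphJoin {α β : Type*} (G : SimpleGraph α) (H : SimpleGraph β) :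
    SimpleGraph (α ⊕ β) where
  Adj x y :=
    match x, y with
    | Sum.inl a, Sum.inl b => G.Adj a b
    | Sum.inr a, Sum.inr b => H.Adj a b
    | Sum.inl _, Sum.inr _ => True
    | Sum.inr _, Sum.inl _ => True
  symm := by
    constructor
    rintro (a | a) (b | b) h
    exacts [G.adj_symm h, trivial, trivial, H.adj_symm h]
  loopless := by
    constructor
    rintro (a | a) h
    exacts [G.irrefl h, H.irrefl h]

/-- The lexicographic product `G[H]`. -/
def lexProd {α β : Type*} (G : SimpleGraph α) (H : SimpleGraph β) :
    SimpleGraph (α × β) where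
  Adj x y := G.Adj x.1 y.1 ∨ (x.1 = y.1 ∧ H.Adj x.2 y.2)
  symm := by
    constructor
    rintro x y (h | ⟨e, h⟩)
    exacts [Or.inl h.symm, Or.inr ⟨e.symm, h.symm⟩]
  loopless := by
    constructor
    rintro x (h | ⟨e, h⟩)
    exacts [G.irrefl h, H.irrefl h]

/-- The friendship graph `F_n`: `n` triangles sharing the central vertex `none`. -/
def friendship (n : ℕ) : SimpleGraph (Option (Fin n × Fin 2)) where
  Adj x y := x ≠ y ∧ (x = none ∨ y = none ∨ ∃ i a b, x = some (i, a) ∧ y = some (i, b))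
  symm := by
    constructor
    rintro x y ⟨hne, h⟩
    refine ⟨hne.symm, ?_⟩
    rcases h with h | h | ⟨i, a, b, hx, hy⟩
    · exact Or.inr (Or.inl h)
    · exact Or.inl h
    · exact Or.inr (Or.inr ⟨i, b, a, hy, hx⟩)
  loopless := ⟨fun x h => h.1 rfl⟩

/-- The bistar `B_{n,n}`: two adjacent centers, each with `n` leaves. -/
def bistar (n : ℕ) : SimpleGraph (Bool ⊕ Bool × Fin n) where
  Adj x y :=
    match x, y with
    | Sum.inl a, Sum.inl b => a ≠ b
    | Sum.inl a, Sum.inr (c, _) => a = c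
    | Sum.inr (c, _), Sum.inl a => a = c
    | Sum.inr _, Sum.inr _ => False
  symm := by
    constructor
    rintro (a | ⟨c, i⟩) (b | ⟨d, j⟩) h
    exacts [h.symm, h, h, h.elim]
  loopless := by
    constructor
    rintro (a | ⟨c, i⟩) h
    exacts [h rfl, h]

/-!
Every vertex of `K̄_m` is adjacent to exactly the vertices of `F_n`, so all of them get the weight
`∑ f(F_n)`, and no other vertex shares it since they are adjacent to all others. On `F_n` the join
only adds the constant `∑ f(K̄_m)` to the weights, and there the `2n` leaf weights
`f(c) + f(partner)` are pairwise distinct by injectivity and differ from the weight of the center,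
their common neighbour. Hence every labeling has exactly `2n + 2` weights, and it remains to
exhibit one: put `1, …, 2n+1` on `F_n` and the larger labels on `K̄_m`. The only condition that is
not automatic, a leaf against `K̄_m`, is met by a suitable label `a ∈ {1, n + 1, 2n + 1}` of the
center.
-/

theorem chiLD_eq_of_card_image_eq {V : Type*} [Fintype V] {G : SimpleGraph V} {k : ℕ}
    (hex : ∃ f, IsLDAL G f) (hcard : ∀ f, IsLDAL G f → #(univ.image (ldWeight G f)) = k) :
    chiLD G = k := by
  obtain ⟨f, hf⟩ := hex
  have : {k | ∃ f, IsLDAL G f ∧ #(univ.image (ldWeight G f)) = k} = {k} := by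
    ext j
    exact ⟨fun ⟨g, hg, hj⟩ => hj ▸ hcard g hg, fun hj => ⟨f, hf, hj ▸ hcard f hf⟩⟩
  rw [chiLD, this, csInf_singleton]

theorem ldWeight_bot {V : Type*} [Fintype V] (f : V → ℕ) (v : V) :
    ldWeight (⊥ : SimpleGraph V) f v = 0 := by
  simp [ldWeight]

section Join

variable {α β : Type*} [Fintype α] [Fintype β] (G : SimpleGraph α)

theorem ldWeight_graphJoin_inl (H : SimpleGraph β) (f : α ⊕ β → ℕ) (a : α) :
    ldWeight (graphJoin G H) f (.inl a) = ldWeight G (f ∘ .inl) a + ∑ b, f (.inr b) := by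
  rw [ldWeight, Fintype.sum_sum_type]
  congr 1
  simp [graphJoin]

theorem ldWeight_graphJoin_inr (H : SimpleGraph β) (f : α ⊕ β → ℕ) (b : β) :
    ldWeight (graphJoin G H) f (.inr b) = ∑ a, f (.inl a) + ldWeight H (f ∘ .inr) b := by
  rw [ldWeight, Fintype.sum_sum_type]
  congr 1
  simp [graphJoin]

theorem card_image_ldWeight_graphJoin_bot [Nonempty β] (f : α ⊕ β → ℕ)
    (hf : ∀ ⦃u v⦄, (graphJoin G (⊥ : SimpleGraph β)).Adj u v →
      ldWeight (graphJoin G ⊥) f u ≠ ldWeight (graphJoin G ⊥) f v) :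
    #(univ.image (ldWeight (graphJoin G (⊥ : SimpleGraph β)) f)) =
      #(univ.image (ldWeight G (f ∘ .inl))) + 1 := by
  have himage : univ.image (ldWeight (graphJoin G (⊥ : SimpleGraph β)) f) =
      insert (∑ a, f (.inl a))
        ((univ.image (ldWeight G (f ∘ .inl))).image (· + ∑ b, f (.inr b))) := by
    ext
    simp [Sum.exists, ldWeight_graphJoin_inl, ldWeight_graphJoin_inr, ldWeight_bot, eq_comm,
      or_comm]
  have hinr : ∑ a, f (.inl a) ∉
      (univ.image (ldWeight G (f ∘ .inl))).image (· + ∑ b, f (.inr b)) := by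
    intro hmem
    obtain ⟨_, hmem', heq⟩ := mem_image.1 hmem
    obtain ⟨a, -, rfl⟩ := mem_image.1 hmem'
    obtain ⟨b⟩ := ‹Nonempty β›
    refine hf (u := .inl a) (v := .inr b) trivial ?_
    rw [ldWeight_graphJoin_inl, ldWeight_graphJoin_inr, ldWeight_bot, heq, add_zero]
  rw [himage, card_insert_of_notMem hinr, card_image_of_injective _ (add_left_injective _)]

end Join

theorem friendship_adj_none_some {n : ℕ} (p : Fin n × Fin 2) :
    (friendship n).Adj none (some p) :=
  ⟨(Option.some_ne_none p).symm, Or.inl rfl⟩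

theorem friendship_adj_some_some {n : ℕ} {i : Fin n} {k : Fin 2} {p : Fin n × Fin 2} :
    (friendship n).Adj (some (i, k)) (some p) ↔ p = (i, k + 1) := by
  have fin_two : ∀ k l : Fin 2, k ≠ l ↔ l = k + 1 := by decide
  obtain ⟨j, l⟩ := p
  simp only [friendship, ne_eq, Option.some.injEq, Prod.mk.injEq, reduceCtorEq, false_or]
  constructor
  · rintro ⟨hne, _, _, _, ⟨rfl, rfl⟩, rfl, rfl⟩
    exact ⟨rfl, (fin_two k l).1 fun h => hne ⟨rfl, h⟩⟩
  · rintro ⟨rfl, rfl⟩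
    exact ⟨fun h => (fin_two k _).2 rfl h.2, _, _, _, ⟨rfl, rfl⟩, rfl, rfl⟩

section Friendship

variable {n : ℕ} (g : Option (Fin n × Fin 2) → ℕ)

theorem ldWeight_friendship_none :
    ldWeight (friendship n) g none = ∑ p, g (some p) := by
  unfold ldWeight
  rw [Fintype.sum_option, if_neg ((friendship n).irrefl), zero_add]
  exact sum_congr rfl fun p _ => if_pos (friendship_adj_none_some p)

theorem ldWeight_friendship_some (i : Fin n) (k : Fin 2) :
    ldWeight (friendship n) g (some (i, k)) = g none + g (some (i, k + 1)) := by
  unfold ldWeight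
  rw [Fintype.sum_option, if_pos (friendship_adj_none_some _).symm]
  simp_rw [friendship_adj_some_some]
  simp

theorem card_image_ldWeight_friendship (hg : Function.Injective g)
    (hadj : ∀ ⦃u v⦄, (friendship n).Adj u v →
      ldWeight (friendship n) g u ≠ ldWeight (friendship n) g v) :
    #(univ.image (ldWeight (friendship n) g)) = 2 * n + 1 := by
  set w := ldWeight (friendship n) g
  have hleaf : Function.Injective fun p => w (some p) := by
    rintro ⟨i, k⟩ ⟨j, l⟩ h
    simp only [w, ldWeight_friendship_some, add_right_inj] at h
    simpa using hg h
  have himage : univ.image w = insert (w none) (univ.image fun p => w (some p)) := by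
    ext; simp [Option.exists, eq_comm]
  have hcenter : w none ∉ univ.image fun p => w (some p) := by
    simpa [eq_comm] using fun p => hadj (friendship_adj_none_some p)
  rw [himage, card_insert_of_notMem hcenter, card_image_of_injective _ hleaf]
  simp [mul_comm]

end Friendship

theorem card_image_ldWeight_friendship_join_bot {n m : ℕ} (hm : 1 ≤ m)
    {f : Option (Fin n × Fin 2) ⊕ Fin m → ℕ}
    (hf : IsLDAL (graphJoin (friendship n) (⊥ : SimpleGraph (Fin m))) f) :
    #(univ.image (ldWeight (graphJoin (friendship n) (⊥ : SimpleGraph (Fin m))) f)) =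
      2 * n + 2 := by
  have : Nonempty (Fin m) := Fin.pos_iff_nonempty.1 hm
  rw [card_image_ldWeight_graphJoin_bot _ _ hf.2, card_image_ldWeight_friendship]
  · exact (Set.injOn_univ.1 hf.1.injOn).comp Sum.inl_injective
  · intro u v huv h
    refine hf.2 (u := .inl u) (v := .inl v) huv ?_
    rw [ldWeight_graphJoin_inl, ldWeight_graphJoin_inl, h]

-- `(2n+1)(n+1) = 1 + ⋯ + (2n+1)`: the weight of the center of `F_n` against that of a leaf.
theorem two_mul_add_ne_triangular {n a x : ℕ} (ha : a ∈ Set.Icc 1 (2 * n + 1))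
    (hx : x ∈ Set.Icc 1 (2 * n + 1)) (hxa : x ≠ a) : 2 * a + x ≠ (2 * n + 1) * (n + 1) := by
  obtain ⟨ha₁, ha₂⟩ := ha
  obtain ⟨hx₁, hx₂⟩ := hx
  rcases n with _ | _ | n
  · omega
  · omega
  · have : 2 * a + x < 6 * (n + 2) + 3 := by omega
    nlinarith

theorem exists_forall_add_add_ne (n R P : ℕ) :
    ∃ a ∈ Set.Icc 1 (2 * n + 1), ∀ x ∈ Set.Icc 1 (2 * n + 1), x ≠ a → a + x + R ≠ P := by
  rcases lt_trichotomy P (R + 2 * n + 2) with h | h | h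
  · exact ⟨2 * n + 1, ⟨by omega, le_rfl⟩, fun x hx _ => by grind⟩
  · exact ⟨n + 1, ⟨by omega, by omega⟩, fun x hx hxa => by grind⟩
  · exact ⟨1, ⟨le_rfl, by omega⟩, fun x hx _ => by grind⟩

theorem sum_fin_val_add_one (N : ℕ) : (∑ i : Fin N, ((i : ℕ) + 1)) * 2 = N * (N + 1) := by
  rw [Fin.sum_univ_eq_sum_range (· + 1), ← Nat.add_zero (∑ i ∈ range N, (i + 1)),
    ← sum_range_succ' (fun i => i), sum_range_id_mul_two, Nat.add_sub_cancel, mul_comm]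

theorem bijOn_val_add_one_of_equiv {V : Type*} [Fintype V] {N : ℕ} (e : V ≃ Fin N) :
    Set.BijOn (fun v => (e v : ℕ) + 1) Set.univ (Set.Icc 1 (Fintype.card V)) := by
  rw [Fintype.card_congr e, Fintype.card_fin]
  refine ⟨fun v _ => ⟨Nat.le_add_left 1 _, (e v).isLt⟩,
    fun u _ v _ h => e.injective (Fin.ext (by simpa using h)),
    fun k hk => ⟨e.symm ⟨k - 1, by grind⟩, trivial, by grind⟩⟩

section Labeling

variable {n m : ℕ} {f : Option (Fin n × Fin 2) ⊕ Fin m → ℕ}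

local notation "Γ" => graphJoin (friendship n) (⊥ : SimpleGraph (Fin m))

theorem ldWeight_ne_of_adj_friendship_join_bot (hf : Function.Injective f)
    (hinl : ∀ x, f (.inl x) ∈ Set.Icc 1 (2 * n + 1)) (hinr : ∀ j, 2 * n + 1 < f (.inr j))
    (hsum : ∑ x, f (.inl x) = (2 * n + 1) * (n + 1))
    (hleaf : ∀ x ∈ Set.Icc 1 (2 * n + 1), x ≠ f (.inl none) →
      f (.inl none) + x + ∑ j, f (.inr j) ≠ (2 * n + 1) * (n + 1))
    ⦃u v : Option (Fin n × Fin 2) ⊕ Fin m⦄ (huv : (Γ).Adj u v) :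
    ldWeight Γ f u ≠ ldWeight Γ f v := by
  rw [Fintype.sum_option] at hsum
  have hpartner : ∀ i k, f (.inl (some (i, k + 1))) ≠ f (.inl none) := fun _ _ h =>
    Option.some_ne_none _ (Sum.inl_injective (hf h))
  have hcenter_leaf : ∀ i k, ldWeight Γ f (.inl none) ≠ ldWeight Γ f (.inl (some (i, k))) := by
    intro i k h
    simp only [ldWeight_graphJoin_inl, ldWeight_friendship_none, ldWeight_friendship_some,
      Function.comp_apply, add_left_inj] at h
    exact two_mul_add_ne_triangular (hinl none) (hinl _) (hpartner i k) (by omega)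
  have hcenter_inr : ∀ j, ldWeight Γ f (.inl none) ≠ ldWeight Γ f (.inr j) := by
    intro j h
    have := single_le_sum (fun j _ => Nat.zero_le (f (.inr j))) (mem_univ j)
    simp only [ldWeight_graphJoin_inl, ldWeight_graphJoin_inr, ldWeight_friendship_none,
      ldWeight_bot, Fintype.sum_option, Function.comp_apply] at h
    grind [hinl none, hinr j]
  have hleaf_inr : ∀ i k j, ldWeight Γ f (.inl (some (i, k))) ≠ ldWeight Γ f (.inr j) := by
    intro i k j h
    simp only [ldWeight_graphJoin_inl, ldWeight_graphJoin_inr, ldWeight_friendship_some,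
      ldWeight_bot, Fintype.sum_option, Function.comp_apply] at h
    exact hleaf _ (hinl _) (hpartner i k) (by omega)
  rcases u with (_ | ⟨i, k⟩) | j <;> rcases v with (_ | ⟨i', k'⟩) | j'
  · exact absurd huv ((Γ).loopless.irrefl _)
  · exact hcenter_leaf i' k'
  · exact hcenter_inr j'
  · exact (hcenter_leaf i k).symm
  · obtain ⟨rfl, rfl⟩ := Prod.mk.inj (friendship_adj_some_some.1 huv)
    simp only [ldWeight_graphJoin_inl, ldWeight_friendship_some, Function.comp_apply, ne_eq,
      add_left_inj, add_right_inj]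
    exact fun h => by simpa using hf h
  · exact hleaf_inr i k j'
  · exact (hcenter_inr j).symm
  · exact (hleaf_inr i' k' j).symm
  · exact absurd huv id

end Labeling

theorem exists_isLDAL_friendship_join_bot (n m : ℕ) :
    ∃ f, IsLDAL (graphJoin (friendship n) (⊥ : SimpleGraph (Fin m))) f := by
  obtain ⟨a, ha, hleaf⟩ :=
    exists_forall_add_add_ne n (∑ j : Fin m, (2 * n + 1 + j + 1)) ((2 * n + 1) * (n + 1))
  let e₀ := Fintype.equivFinOfCardEq
    (show Fintype.card (Option (Fin n × Fin 2)) = 2 * n + 1 by simp [mul_comm])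
  let e := e₀.trans (Equiv.swap (e₀ none) ⟨a - 1, by grind⟩)
  have he : (e none : ℕ) + 1 = a := by simp [e]; grind
  let E := (e.sumCongr (Equiv.refl (Fin m))).trans finSumFinEquiv
  refine ⟨fun v => (E v : ℕ) + 1, bijOn_val_add_one_of_equiv E,
    ldWeight_ne_of_adj_friendship_join_bot ?_ (fun x => ?_) (fun j => ?_) ?_ ?_⟩
  · exact fun u v h => E.injective (Fin.ext (by simpa using h))
  · simpa [E, Nat.lt_succ_iff] using (e x).isLt
  · simp [E]
  · have := sum_fin_val_add_one (2 * n + 1)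
    simp only [E, Equiv.trans_apply, Equiv.sumCongr_apply, Sum.map_inl,
      finSumFinEquiv_apply_left, Fin.val_castAdd]
    rw [Equiv.sum_comp e (fun i => (i : ℕ) + 1)]
    grind
  · simpa [E, he] using hleaf

theorem stmt_7_general (n m : ℕ) (hm : 1 ≤ m) :
    chiLD (graphJoin (friendship n) (⊥ : SimpleGraph (Fin m))) = 2 * n + 2 :=
  chiLD_eq_of_card_image_eq (exists_isLDAL_friendship_join_bot n m)
    fun _ hf => card_image_ldWeight_friendship_join_bot hm hf

theorem stmt_7 (n m : ℕ) (hn : 1 ≤ n) (hm : 1 ≤ m) :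
    chiLD (graphJoin (friendship n) (⊥ : SimpleGraph (Fin m))) = 2 * n + 2 :=
  stmt_7_general n m hm
end

section
/- Let n ≥ 3 be odd and m ≥ 1. Define n × m matrices B and C by: b_{1,j} = j, b_{2,j} = j+m, b_{3,j} = 4m - (2j-2), b_{i,j} = 6m + 2j - 1 + 2m(i-4) for even i ≥ 4, b_{i,j} = 2im - (2j-1) for odd i ≥ 5; and c_{1,j} = 4m+1-2j, c_{2,j} = 4m+j, c_{3,j} = 5m+j, c_{i,j} = 6m+2j+2m(i-4) for even i ≥ 4, c_{i,j} = 2im-(2j-2) for odd i ≥ 5. Then the entries of B and C together form a bijective arrangement of {1,...,2mn}, every column of B has sum mn² - 4m + 2, and every column of C has sum mn² + 4m + n - 2. -/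
/-
Rows 1–3 of `B` and `C` together carry exactly the labels `1, …, 6m`, and for `i ≥ 4` row `i`
of `B` and `C` fills the band `(2m(i-1), 2mi]`, `B` with its odd and `C` with its even labels.
Hence the labelling maps the `2mn` cells onto `{1, …, 2mn}`, so it is a bijection by counting.
For the column sums, the rows `i, i + 1` (`i ≥ 4` even) contribute `4mi` to a column of `B` and
`4mi + 2` to one of `C`, while the first three rows contribute `5m + 2` and `13m + 1`.
-/

open Finset

def matB (m i j : ℕ) : ℕ :=
  if i = 1 then j
  else if i = 2 then j + m
  else if i = 3 then 4 * m - (2 * j - 2)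
  else if i % 2 = 0 then 6 * m + 2 * j - 1 + 2 * m * (i - 4)
  else 2 * i * m - (2 * j - 1)

def matC (m i j : ℕ) : ℕ :=
  if i = 1 then 4 * m + 1 - 2 * j
  else if i = 2 then 4 * m + j
  else if i = 3 then 5 * m + j
  else if i % 2 = 0 then 6 * m + 2 * j + 2 * m * (i - 4)
  else 2 * i * m - (2 * j - 2)

def labelling (m : ℕ) : (ℕ × ℕ) ⊕ (ℕ × ℕ) → ℕ :=
  Sum.elim (fun p => matB m p.1 p.2) (fun p => matC m p.1 p.2)

section Labels

variable {m i j : ℕ}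

lemma two_mul_mul_sub_one_of_four_le (hi : 4 ≤ i) :
    2 * m * (i - 1) = 2 * m * (i - 4) + 6 * m := by
  rw [show i - 1 = i - 4 + 3 by omega]
  ring

lemma two_mul_mul_of_one_le (hi : 1 ≤ i) : 2 * m * i = 2 * m * (i - 1) + 2 * m := by
  conv_lhs => rw [← Nat.sub_add_cancel hi]
  ring

lemma matB_of_even (hi : 4 ≤ i) (he : i % 2 = 0) (hj : 1 ≤ j) :
    matB m i j = 2 * m * (i - 1) + 2 * j - 1 := by
  rw [matB, if_neg (by omega), if_neg (by omega), if_neg (by omega), if_pos he,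
    two_mul_mul_sub_one_of_four_le hi]
  generalize 2 * m * (i - 4) = a
  omega

lemma matC_of_even (hi : 4 ≤ i) (he : i % 2 = 0) : matC m i j = 2 * m * (i - 1) + 2 * j := by
  rw [matC, if_neg (by omega), if_neg (by omega), if_neg (by omega), if_pos he,
    two_mul_mul_sub_one_of_four_le hi]
  generalize 2 * m * (i - 4) = a
  omega

lemma matB_of_odd (hi : 4 ≤ i) (ho : i % 2 = 1) (hj : j ∈ Icc 1 m) :
    matB m i j = 2 * m * (i - 1) + (2 * m + 1 - 2 * j) := by
  rw [mem_Icc] at hj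
  rw [matB, if_neg (by omega), if_neg (by omega), if_neg (by omega), if_neg (by omega),
    mul_right_comm 2 i m, two_mul_mul_of_one_le (by omega)]
  generalize 2 * m * (i - 1) = a
  omega

lemma matC_of_odd (hi : 4 ≤ i) (ho : i % 2 = 1) (hj : j ∈ Icc 1 m) :
    matC m i j = 2 * m * (i - 1) + (2 * m + 2 - 2 * j) := by
  rw [mem_Icc] at hj
  rw [matC, if_neg (by omega), if_neg (by omega), if_neg (by omega), if_neg (by omega),
    mul_right_comm 2 i m, two_mul_mul_of_one_le (by omega)]
  generalize 2 * m * (i - 1) = a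
  omega

lemma exists_first_rows_eq {t : ℕ} (ht : t ∈ Icc 1 (6 * m)) :
    ∃ i ∈ Icc 1 3, ∃ j ∈ Icc 1 m, matB m i j = t ∨ matC m i j = t := by
  rw [mem_Icc] at ht
  by_cases h1 : t ≤ m
  · exact ⟨1, by decide, t, mem_Icc.mpr ⟨ht.1, h1⟩, Or.inl rfl⟩
  by_cases h2 : t ≤ 2 * m
  · exact ⟨2, by decide, t - m, by rw [mem_Icc]; omega,
      Or.inl (show t - m + m = t by omega)⟩
  by_cases h4 : t ≤ 4 * m
  · rcases Nat.mod_two_eq_zero_or_one t with hte | hto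
    · exact ⟨3, by decide, (4 * m + 2 - t) / 2, by rw [mem_Icc]; omega,
        Or.inl (show 4 * m - (2 * ((4 * m + 2 - t) / 2) - 2) = t by omega)⟩
    · exact ⟨1, by decide, (4 * m + 1 - t) / 2, by rw [mem_Icc]; omega,
        Or.inr (show 4 * m + 1 - 2 * ((4 * m + 1 - t) / 2) = t by omega)⟩
  by_cases h5 : t ≤ 5 * m
  · exact ⟨2, by decide, t - 4 * m, by rw [mem_Icc]; omega,
      Or.inr (show 4 * m + (t - 4 * m) = t by omega)⟩
  · exact ⟨3, by decide, t - 5 * m, by rw [mem_Icc]; omega,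
      Or.inr (show 5 * m + (t - 5 * m) = t by omega)⟩

lemma exists_row_eq_of_mem_Ioc {t : ℕ} (hi : 4 ≤ i)
    (ht : t ∈ Ioc (2 * m * (i - 1)) (2 * m * i)) :
    ∃ j ∈ Icc 1 m, matB m i j = t ∨ matC m i j = t := by
  rw [mem_Ioc, two_mul_mul_of_one_le (by omega : 1 ≤ i)] at ht
  rcases Nat.mod_two_eq_zero_or_one i with he | ho <;>
    rcases Nat.mod_two_eq_zero_or_one (t - 2 * m * (i - 1)) with hte | hto
  · exact ⟨(t - 2 * m * (i - 1)) / 2, by rw [mem_Icc]; omega,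
      Or.inr (by rw [matC_of_even hi he]; omega)⟩
  · exact ⟨(t - 2 * m * (i - 1) + 1) / 2, by rw [mem_Icc]; omega,
      Or.inl (by rw [matB_of_even hi he (by omega)]; omega)⟩
  · refine ⟨(2 * m + 2 - (t - 2 * m * (i - 1))) / 2, by rw [mem_Icc]; omega, Or.inr ?_⟩
    rw [matC_of_odd hi ho (by rw [mem_Icc]; omega)]
    omega
  · refine ⟨(2 * m + 1 - (t - 2 * m * (i - 1))) / 2, by rw [mem_Icc]; omega, Or.inl ?_⟩
    rw [matB_of_odd hi ho (by rw [mem_Icc]; omega)]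
    omega

lemma exists_eq_of_mem_Icc {n t : ℕ} (hn : 3 ≤ n) (ht : t ∈ Icc 1 (2 * m * n)) :
    ∃ i ∈ Icc 1 n, ∃ j ∈ Icc 1 m, matB m i j = t ∨ matC m i j = t := by
  rw [mem_Icc] at ht
  by_cases h6 : t ≤ 6 * m
  · obtain ⟨i, hi, h⟩ := exists_first_rows_eq (mem_Icc.mpr ⟨ht.1, h6⟩)
    exact ⟨i, Icc_subset_Icc_right hn hi, h⟩
  have hm : 0 < 2 * m := Nat.pos_of_ne_zero fun h => by rw [h, zero_mul] at ht; omega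
  -- `t` lies in the band of row `(t - 1) / (2m) + 1`
  have h3q : 3 ≤ (t - 1) / (2 * m) := (Nat.le_div_iff_mul_le hm).mpr (by omega)
  have hqn : (t - 1) / (2 * m) < n := (Nat.div_lt_iff_lt_mul hm).mpr (by rw [mul_comm]; omega)
  refine ⟨(t - 1) / (2 * m) + 1, mem_Icc.mpr ⟨by omega, hqn⟩,
    exists_row_eq_of_mem_Ioc (by omega) ?_⟩
  have hq := Nat.div_add_mod (t - 1) (2 * m)
  have hr := Nat.mod_lt (t - 1) hm
  rw [mem_Ioc, Nat.add_sub_cancel, mul_add_one]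
  generalize (t - 1) / (2 * m) = q at hq ⊢
  omega

lemma matB_mem_Icc_and_matC_mem_Icc {n : ℕ} (hn : 3 ≤ n) (hi : i ∈ Icc 1 n)
    (hj : j ∈ Icc 1 m) :
    matB m i j ∈ Icc 1 (2 * m * n) ∧ matC m i j ∈ Icc 1 (2 * m * n) := by
  simp only [mem_Icc] at hi ⊢
  have hj' := mem_Icc.mp hj
  have hin : 2 * m * i ≤ 2 * m * n := Nat.mul_le_mul_left _ hi.2
  by_cases h3 : i ≤ 3
  · have h6 : 2 * m * 3 ≤ 2 * m * n := Nat.mul_le_mul_left _ hn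
    interval_cases i <;> simp only [matB, matC, ↓reduceIte, Nat.reduceEqDiff] <;> omega
  rw [two_mul_mul_of_one_le (by omega)] at hin
  rcases Nat.mod_two_eq_zero_or_one i with he | ho
  · rw [matB_of_even (by omega) he hj'.1, matC_of_even (by omega) he]
    omega
  · rw [matB_of_odd (by omega) ho hj, matC_of_odd (by omega) ho hj]
    omega

lemma bijOn_labelling {n : ℕ} (hn : 3 ≤ n) :
    Set.BijOn (labelling m)
      (Sum.inl '' (Set.Icc 1 n ×ˢ Set.Icc 1 m) ∪ Sum.inr '' (Set.Icc 1 n ×ˢ Set.Icc 1 m))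
      (Set.Icc 1 (2 * m * n)) := by
  set cells := Icc 1 n ×ˢ Icc 1 m
  have hcells : (↑(cells.disjSum cells) : Set ((ℕ × ℕ) ⊕ (ℕ × ℕ))) =
      Sum.inl '' (Set.Icc 1 n ×ˢ Set.Icc 1 m) ∪ Sum.inr '' (Set.Icc 1 n ×ˢ Set.Icc 1 m) := by
    ext (p | p) <;> simp [cells, -Set.Icc_prod_Icc]
  rw [← hcells, ← coe_Icc]
  have hmaps : Set.MapsTo (labelling m) (cells.disjSum cells) (Icc 1 (2 * m * n)) := by
    rintro (⟨i, j⟩ | ⟨i, j⟩) hx <;>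
      simp only [mem_coe, inl_mem_disjSum, inr_mem_disjSum, cells, mem_product] at hx
    · exact (matB_mem_Icc_and_matC_mem_Icc hn hx.1 hx.2).1
    · exact (matB_mem_Icc_and_matC_mem_Icc hn hx.1 hx.2).2
  have hsurj : Set.SurjOn (labelling m) (cells.disjSum cells) (Icc 1 (2 * m * n)) := by
    intro t ht
    obtain ⟨i, hi, j, hj, h | h⟩ := exists_eq_of_mem_Icc hn ht
    · exact ⟨Sum.inl (i, j), by simp [cells, hi, hj], h⟩
    · exact ⟨Sum.inr (i, j), by simp [cells, hi, hj], h⟩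
  refine ⟨hmaps, injOn_of_surjOn_of_card_le _ hmaps hsurj ?_, hsurj⟩
  simp only [card_disjSum, card_product, Nat.card_Icc, cells, Nat.add_sub_cancel]
  linarith

lemma sum_matB_first_rows (hj : j ∈ Icc 1 m) : ∑ i ∈ Icc 1 3, matB m i j = 5 * m + 2 := by
  rw [mem_Icc] at hj
  rw [sum_Icc_succ_top (by omega), sum_Icc_succ_top (by omega), Icc_self, sum_singleton]
  show j + (j + m) + (4 * m - (2 * j - 2)) = _
  omega

lemma sum_matC_first_rows (hj : j ∈ Icc 1 m) : ∑ i ∈ Icc 1 3, matC m i j = 13 * m + 1 := by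
  rw [mem_Icc] at hj
  rw [sum_Icc_succ_top (by omega), sum_Icc_succ_top (by omega), Icc_self, sum_singleton]
  show 4 * m + 1 - 2 * j + (4 * m + j) + (5 * m + j) = _
  omega

lemma matB_add_matB_succ (hi : 4 ≤ i) (he : i % 2 = 0) (hj : j ∈ Icc 1 m) :
    matB m i j + matB m (i + 1) j = 4 * m * i := by
  have hj' := mem_Icc.mp hj
  rw [matB_of_even hi he hj'.1, matB_of_odd (by omega) (by omega) hj, Nat.add_sub_cancel,
    show 4 * m * i = 2 * m * i + 2 * m * i by ring, two_mul_mul_of_one_le (by omega : 1 ≤ i)]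
  omega

lemma matC_add_matC_succ (hi : 4 ≤ i) (he : i % 2 = 0) (hj : j ∈ Icc 1 m) :
    matC m i j + matC m (i + 1) j = 4 * m * i + 2 := by
  have hj' := mem_Icc.mp hj
  rw [matC_of_even hi he, matC_of_odd (by omega) (by omega) hj, Nat.add_sub_cancel,
    show 4 * m * i = 2 * m * i + 2 * m * i by ring, two_mul_mul_of_one_le (by omega : 1 ≤ i)]
  omega

lemma sum_Icc_two_mul_add_three_of_pair_sum {f : ℕ → ℕ} {c : ℕ}
    (hpair : ∀ i, 4 ≤ i → i % 2 = 0 → f i + f (i + 1) = 4 * m * i + 2 * c) (k : ℕ) :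
    ∑ i ∈ Icc 1 (2 * k + 3), f i + 9 * m + 3 * c =
      ∑ i ∈ Icc 1 3, f i + m * (2 * k + 3) ^ 2 + c * (2 * k + 3) := by
  induction k with
  | zero => ring
  | succ k ih =>
    have hp := hpair (2 * k + 4) (by omega) (by omega)
    rw [show 2 * (k + 1) + 3 = 2 * k + 3 + 1 + 1 by ring, sum_Icc_succ_top (by omega),
      sum_Icc_succ_top (by omega)]
    linear_combination ih + hp

end Labels

theorem stmt_10_general (n m : ℕ) (hn : 3 ≤ n) (hno : Odd n)
    (B C : ℕ → ℕ → ℕ)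
    (hB : ∀ i j, B i j =
      if i = 1 then j
      else if i = 2 then j + m
      else if i = 3 then 4 * m - (2 * j - 2)
      else if i % 2 = 0 then 6 * m + 2 * j - 1 + 2 * m * (i - 4)
      else 2 * i * m - (2 * j - 1))
    (hC : ∀ i j, C i j =
      if i = 1 then 4 * m + 1 - 2 * j
      else if i = 2 then 4 * m + j
      else if i = 3 then 5 * m + j
      else if i % 2 = 0 then 6 * m + 2 * j + 2 * m * (i - 4)
      else 2 * i * m - (2 * j - 2)) :
    Set.BijOn (Sum.elim (fun p : ℕ × ℕ => B p.1 p.2) (fun p : ℕ × ℕ => C p.1 p.2))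
      (Sum.inl '' (Set.Icc 1 n ×ˢ Set.Icc 1 m) ∪ Sum.inr '' (Set.Icc 1 n ×ˢ Set.Icc 1 m))
      (Set.Icc 1 (2 * m * n)) ∧
    (∀ j ∈ Finset.Icc 1 m, ∑ i ∈ Finset.Icc 1 n, B i j = m * n ^ 2 - 4 * m + 2) ∧
    (∀ j ∈ Finset.Icc 1 m, ∑ i ∈ Finset.Icc 1 n, C i j = m * n ^ 2 + 4 * m + n - 2) := by
  obtain rfl : B = matB m := funext₂ hB
  obtain rfl : C = matC m := funext₂ hC
  obtain ⟨k, rfl⟩ : ∃ k, n = 2 * k + 3 := by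
    obtain ⟨p, hp⟩ := hno
    exact ⟨p - 1, by omega⟩
  have h9 : 9 * m ≤ m * (2 * k + 3) ^ 2 := by
    rw [mul_comm 9 m]
    exact Nat.mul_le_mul_left m (by nlinarith)
  refine ⟨bijOn_labelling hn, fun j hj => ?_, fun j hj => ?_⟩
  · have h := sum_Icc_two_mul_add_three_of_pair_sum (c := 0)
      (fun i hi he => by simpa using matB_add_matB_succ hi he hj) k
    rw [sum_matB_first_rows hj] at h
    omega
  · have h := sum_Icc_two_mul_add_three_of_pair_sum (c := 1)
      (fun i hi he => matC_add_matC_succ hi he hj) k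
    rw [sum_matC_first_rows hj] at h
    omega

theorem stmt_10 (n m : ℕ) (hn : 3 ≤ n) (hno : Odd n) (hm : 1 ≤ m)
    (B C : ℕ → ℕ → ℕ)
    (hB : ∀ i j, B i j =
      if i = 1 then j
      else if i = 2 then j + m
      else if i = 3 then 4 * m - (2 * j - 2)
      else if i % 2 = 0 then 6 * m + 2 * j - 1 + 2 * m * (i - 4)
      else 2 * i * m - (2 * j - 1))
    (hC : ∀ i j, C i j =
      if i = 1 then 4 * m + 1 - 2 * j
      else if i = 2 then 4 * m + j
      else if i = 3 then 5 * m + j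
      else if i % 2 = 0 then 6 * m + 2 * j + 2 * m * (i - 4)
      else 2 * i * m - (2 * j - 2)) :
    Set.BijOn (Sum.elim (fun p : ℕ × ℕ => B p.1 p.2) (fun p : ℕ × ℕ => C p.1 p.2))
      (Sum.inl '' (Set.Icc 1 n ×ˢ Set.Icc 1 m) ∪ Sum.inr '' (Set.Icc 1 n ×ˢ Set.Icc 1 m))
      (Set.Icc 1 (2 * m * n)) ∧
    (∀ j ∈ Finset.Icc 1 m, ∑ i ∈ Finset.Icc 1 n, B i j = m * n ^ 2 - 4 * m + 2) ∧
    (∀ j ∈ Finset.Icc 1 m, ∑ i ∈ Finset.Icc 1 n, C i j = m * n ^ 2 + 4 * m + n - 2) :=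
  stmt_10_general n m hn hno B C hB hC
end

section
/- For positive integers m and n > 1, and H an r-regular graph of order n admitting a local distance antimagic labeling, χ_ld(K_m[H]) ≤ m · χ_ld(H). In particular, in the labeling g(y_i^j) = f(y_i) + (j-1)n built from an optimal labeling f of H, the weight of vertex y_i^j equals n(m-1)(nm+n+1)/2 + w_f(y_i) - (j-1)n(n-r). -/
open Finset

/-!
Give the copy `j` of `H` the labels `f y + j n`. A vertex of copy `j` sees every vertex of the
other copies and its own `H`-neighbours, so its weight is a constant plus `w_f(y) - j n (n - r)`.
In an `r`-regular graph the neighbourhoods of two vertices differ in at most `n - r` vertices on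
each side, so two `H`-weights differ by less than `n (n - r)`: vertices in different copies get
different weights, and inside a copy the labeling inherits antimagicness from `f`. Since the
weight of `(j, y)` depends only on `j` and `w_f(y)`, an optimal `f` yields at most `m · χ_ld(H)`
weights.
-/

open SimpleGraph

lemma eq_and_eq_of_add_mul_eq {a b j k D : ℕ} (ha : a < b + D) (hb : b < a + D)
    (h : a + j * D = b + k * D) : j = k ∧ a = b := by
  have hjk : j = k := by
    rcases lt_trichotomy j k with hlt | heq | hlt
    · nlinarith
    · exact heq
    · nlinarith
  exact ⟨hjk, by subst hjk; omega⟩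

section Weights

variable {V : Type*} [Fintype V]

lemma ldWeight_eq_sum_neighborFinset (G : SimpleGraph V) [DecidableRel G.Adj] (f : V → ℕ)
    (v : V) : ldWeight G f v = ∑ x ∈ G.neighborFinset v, f x := by
  rw [neighborFinset_eq_filter, sum_filter, ldWeight]
  congr!

lemma ldWeight_add_const (G : SimpleGraph V) [DecidableRel G.Adj] (f : V → ℕ) (c : ℕ)
    (v : V) : ldWeight G (fun x => f x + c) v = ldWeight G f v + G.degree v * c := by
  simp only [ldWeight_eq_sum_neighborFinset, sum_add_distrib, sum_const,
    card_neighborFinset_eq_degree, smul_eq_mul]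

lemma ldWeight_top_add_self (f : V → ℕ) (v : V) :
    ldWeight ⊤ f v + f v = ∑ x, f x := by
  classical
  rw [ldWeight, ← Fintype.sum_ite_eq v f, ← sum_add_distrib]
  exact sum_congr rfl fun x _ => by by_cases h : v = x <;> simp [h]

lemma ldWeight_lexProd {α β : Type*} [Fintype α] [Fintype β] (G : SimpleGraph α)
    (H : SimpleGraph β) (g : α × β → ℕ) (a : α) (b : β) :
    ldWeight (lexProd G H) g (a, b) =
      ldWeight G (fun k => ∑ z, g (k, z)) a + ldWeight H (fun z => g (a, z)) b := by
  classical
  calc ldWeight (lexProd G H) g (a, b)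
      = ∑ x, ((if G.Adj a x then ∑ z, g (x, z) else 0) +
          if a = x then ∑ z, (if H.Adj b z then g (x, z) else 0) else 0) := by
        rw [ldWeight, Fintype.sum_prod_type]
        refine sum_congr rfl fun x _ => ?_
        by_cases hx : G.Adj a x
        · simp [lexProd, hx, G.ne_of_adj hx]
        · by_cases hax : a = x <;> simp [lexProd, hx, hax]
    _ = _ := by rw [sum_add_distrib, Fintype.sum_ite_eq, ldWeight, ldWeight]

lemma two_mul_sum_eq_of_bijOn {f : V → ℕ} {n : ℕ} (hf : Set.BijOn f Set.univ (Set.Icc 1 n)) :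
    2 * ∑ x, f x = n * (n + 1) := by
  have hsum : ∑ x, f x = ∑ i ∈ range (n + 1), i := by
    rw [range_eq_Ico, sum_eq_sum_Ico_succ_bot n.succ_pos]
    simp only [zero_add, Nat.succ_eq_add_one, Ico_add_one_right_eq_Icc]
    exact sum_nbij f (fun x _ => by simpa using hf.mapsTo (Set.mem_univ x))
      (by simpa using hf.injOn) (by simpa using hf.surjOn) fun _ _ => rfl
  rw [hsum, mul_comm, sum_range_id_mul_two, Nat.add_sub_cancel, mul_comm]

lemma two_mul_ldWeight_lexProd_top_shift {H : SimpleGraph V} [DecidableRel H.Adj] {r : ℕ}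
    (hreg : H.IsRegularOfDegree r) {f : V → ℕ}
    (hf : Set.BijOn f Set.univ (Set.Icc 1 (Fintype.card V))) {m : ℕ} (j : Fin m) (y : V) :
    2 * (ldWeight (lexProd (⊤ : SimpleGraph (Fin m)) H)
          (fun p => f p.2 + (p.1 : ℕ) * Fintype.card V) (j, y) +
        (j : ℕ) * Fintype.card V * (Fintype.card V - r)) =
      Fintype.card V * (m - 1) * (Fintype.card V * m + Fintype.card V + 1) +
        2 * ldWeight H f y := by
  set n := Fintype.card V
  have hrn : r ≤ n := hreg y ▸ (H.degree_lt_card_verts y).le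
  have hm : 1 ≤ m := j.pos
  have hlabels := two_mul_sum_eq_of_bijOn hf
  have hblock : ∀ k : Fin m, ∑ z, (f z + (k : ℕ) * n) = ∑ z, f z + n * ((k : ℕ) * n) := by
    simp [sum_add_distrib, n]
  have hgauss : (∑ k : Fin m, (k : ℕ)) * 2 = m * (m - 1) := by
    rw [Fin.sum_univ_eq_sum_range (fun k => k), sum_range_id_mul_two]
  have hW := ldWeight_lexProd (⊤ : SimpleGraph (Fin m)) H
    (fun p : Fin m × V => f p.2 + (p.1 : ℕ) * n) j y
  dsimp only at hW
  have htop := ldWeight_top_add_self (fun k : Fin m => ∑ z, (f z + (k : ℕ) * n)) j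
  simp only [hblock, sum_add_distrib, sum_const, card_univ, Fintype.card_fin, smul_eq_mul,
    ← mul_sum, ← sum_mul] at htop
  rw [ldWeight_add_const, hreg y] at hW
  simp only [hblock] at hW
  zify [hrn, hm] at hW htop hlabels hgauss ⊢
  linear_combination 2 * hW + 2 * htop + ((m : ℤ) - 1) * hlabels + (n : ℤ) ^ 2 * hgauss

lemma ldWeight_lt_add_of_isRegularOfDegree {H : SimpleGraph V} [DecidableRel H.Adj] {r N : ℕ}
    (hreg : H.IsRegularOfDegree r) {f : V → ℕ} (hf : ∀ x, f x ∈ Set.Icc 1 N) (y z : V) :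
    ldWeight H f y < ldWeight H f z + N * (Fintype.card V - r) := by
  classical
  rw [ldWeight_eq_sum_neighborFinset, ldWeight_eq_sum_neighborFinset,
    ← sum_inter_add_sum_sdiff (H.neighborFinset y) (H.neighborFinset z),
    ← sum_inter_add_sum_sdiff (H.neighborFinset z) (H.neighborFinset y), inter_comm]
  set A := H.neighborFinset y \ H.neighborFinset z
  set B := H.neighborFinset z \ H.neighborFinset y
  have hAB : #A = #B :=
    card_sdiff_comm (by simp only [card_neighborFinset_eq_degree, hreg y, hreg z])
  have hA : #A ≤ Fintype.card V - r := by
    calc #A ≤ #(H.neighborFinset z)ᶜ := card_le_card fun x hx => mem_compl.2 (mem_sdiff.1 hx).2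
      _ = Fintype.card V - r := by rw [card_compl, card_neighborFinset_eq_degree, hreg z]
  have hpos : 0 < N * (Fintype.card V - r) :=
    Nat.mul_pos ((hf y).1.trans (hf y).2)
      (Nat.sub_pos_of_lt (hreg y ▸ H.degree_lt_card_verts y))
  have hAsum : ∑ x ∈ A, f x ≤ #A * N := by
    simpa using sum_le_card_nsmul A f N fun x _ => (hf x).2
  have hBsum : #B ≤ ∑ x ∈ B, f x := by
    simpa using card_nsmul_le_sum B f 1 fun x _ => (hf x).1
  have hAN := Nat.mul_le_mul_right N hA
  rcases Nat.eq_zero_or_pos #A with h0 | h0 <;> nlinarith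

lemma bijOn_shift {m : ℕ} {f : V → ℕ}
    (hf : Set.BijOn f Set.univ (Set.Icc 1 (Fintype.card V))) :
    Set.BijOn (fun p : Fin m × V => f p.2 + (p.1 : ℕ) * Fintype.card V) Set.univ
      (Set.Icc 1 (Fintype.card (Fin m × V))) := by
  set n := Fintype.card V
  have hfn : ∀ x, 1 ≤ f x ∧ f x ≤ n := fun x => hf.mapsTo (Set.mem_univ x)
  have hmaps : Set.MapsTo (fun p : Fin m × V => f p.2 + (p.1 : ℕ) * n) Set.univ
      (Set.Icc 1 (m * n)) := by
    rintro ⟨j, y⟩ -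
    have hy := hfn y
    have hj := Nat.mul_le_mul_right n (j.isLt : (j : ℕ) + 1 ≤ m)
    constructor <;> nlinarith
  have hinj : Set.InjOn (fun p : Fin m × V => f p.2 + (p.1 : ℕ) * n) Set.univ := by
    rintro ⟨j, y⟩ - ⟨k, z⟩ - h
    obtain ⟨hjk, hyz⟩ := eq_and_eq_of_add_mul_eq (by grind) (by grind) h
    exact Prod.ext (Fin.ext hjk) (hf.injOn trivial trivial hyz)
  rw [Fintype.card_prod, Fintype.card_fin]
  refine ⟨hmaps, hinj, ?_⟩
  simpa using surjOn_of_injOn_of_card_le (s := univ) (t := Finset.Icc 1 (m * n)) _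
    (by simpa using hmaps) (by simpa using hinj) (by simp [n])

lemma IsLDAL.lexProd_top_shift {H : SimpleGraph V} [DecidableRel H.Adj] {r : ℕ}
    (hreg : H.IsRegularOfDegree r) {f : V → ℕ} (hf : IsLDAL H f) (m : ℕ) :
    IsLDAL (lexProd (⊤ : SimpleGraph (Fin m)) H)
      (fun p => f p.2 + (p.1 : ℕ) * Fintype.card V) := by
  refine ⟨bijOn_shift hf.1, ?_⟩
  rintro ⟨j, y⟩ ⟨k, z⟩ hadj hW
  have hy := two_mul_ldWeight_lexProd_top_shift hreg hf.1 j y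
  have hz := two_mul_ldWeight_lexProd_top_shift hreg hf.1 k z
  have hlabel : ∀ x, f x ∈ Set.Icc 1 (Fintype.card V) := fun x => hf.1.mapsTo (Set.mem_univ x)
  obtain ⟨hkj, hw⟩ := eq_and_eq_of_add_mul_eq
    (ldWeight_lt_add_of_isRegularOfDegree hreg hlabel y z)
    (ldWeight_lt_add_of_isRegularOfDegree hreg hlabel z y)
    (k := j) (j := k) (by rw [← mul_assoc, ← mul_assoc]; omega)
  obtain rfl := Fin.ext hkj
  rcases hadj with hjj | ⟨-, hyz⟩
  · exact (⊤ : SimpleGraph (Fin m)).irrefl hjj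
  · exact hf.2 hyz hw

end Weights

lemma card_image_le_mul_card_image {α β γ δ : Type*} [Fintype α] [Fintype β] [DecidableEq γ]
    [DecidableEq δ] (F : α × β → δ) (w : β → γ) (φ : α → γ → δ)
    (hF : ∀ p, F p = φ p.1 (w p.2)) :
    #(univ.image F) ≤ Fintype.card α * #(univ.image w) := by
  calc #(univ.image F) ≤ #((univ ×ˢ univ.image w).image fun q => φ q.1 q.2) := by
        refine card_le_card fun d hd => ?_
        obtain ⟨p, -, rfl⟩ := mem_image.1 hd
        exact mem_image.2 ⟨(p.1, w p.2), by simp, (hF p).symm⟩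
    _ ≤ #(univ ×ˢ univ.image w) := card_image_le
    _ = Fintype.card α * #(univ.image w) := by rw [card_product, card_univ]

section ChiLD

variable {α : Type*} [Fintype α] {G : SimpleGraph α}

lemma chiLD_le_card_image {g : α → ℕ} (hg : IsLDAL G g) :
    chiLD G ≤ #(univ.image (ldWeight G g)) :=
  Nat.sInf_le ⟨g, hg, rfl⟩

lemma exists_isLDAL_card_image_eq_chiLD (h : ∃ f, IsLDAL G f) :
    ∃ f, IsLDAL G f ∧ #(univ.image (ldWeight G f)) = chiLD G := by
  obtain ⟨f, hf⟩ := h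
  exact Nat.sInf_mem (s := {k | ∃ f, IsLDAL G f ∧ #(univ.image (ldWeight G f)) = k})
    ⟨_, f, hf, rfl⟩

end ChiLD

theorem stmt_18_general {V : Type*} [Fintype V] (H : SimpleGraph V) [DecidableRel H.Adj]
    (m n r : ℕ) (hcard : Fintype.card V = n)
    (hreg : H.IsRegularOfDegree r)
    (hex : ∃ f, IsLDAL H f) :
    chiLD (lexProd (⊤ : SimpleGraph (Fin m)) H) ≤ m * chiLD H ∧
    ∀ f : V → ℕ, IsLDAL H f →
      (Finset.univ.image (ldWeight H f)).card = chiLD H →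
      ∀ (j : Fin m) (y : V),
        2 * (ldWeight (lexProd (⊤ : SimpleGraph (Fin m)) H)
              (fun p => f p.2 + (p.1 : ℕ) * n) (j, y) + (j : ℕ) * n * (n - r)) =
          n * (m - 1) * (n * m + n + 1) + 2 * ldWeight H f y := by
  subst hcard
  have hweight (f : V → ℕ) (hf : IsLDAL H f) :=
    two_mul_ldWeight_lexProd_top_shift (m := m) hreg hf.1
  refine ⟨?_, fun f hf _ => hweight f hf⟩
  obtain ⟨f, hf, hchi⟩ := exists_isLDAL_card_image_eq_chiLD hex
  set n := Fintype.card V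
  calc chiLD (lexProd (⊤ : SimpleGraph (Fin m)) H)
      ≤ #(univ.image (ldWeight (lexProd ⊤ H) fun p : Fin m × V => f p.2 + (p.1 : ℕ) * n)) :=
        chiLD_le_card_image (hf.lexProd_top_shift hreg m)
    _ ≤ Fintype.card (Fin m) * #(univ.image (ldWeight H f)) :=
        card_image_le_mul_card_image _ _
          (fun j w => (n * (m - 1) * (n * m + n + 1) + 2 * w) / 2 - (j : ℕ) * n * (n - r))
          fun ⟨j, y⟩ => by
            have hjy := hweight f hf j y
            dsimp only
            generalize (j : ℕ) * n * (n - r) = D at *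
            omega
    _ = m * chiLD H := by rw [Fintype.card_fin, hchi]

theorem stmt_18 {V : Type*} [Fintype V] (H : SimpleGraph V) [DecidableRel H.Adj]
    (m n r : ℕ) (hm : 0 < m) (hn : 1 < n) (hcard : Fintype.card V = n)
    (hreg : H.IsRegularOfDegree r)
    (hex : ∃ f, IsLDAL H f) :
    chiLD (lexProd (⊤ : SimpleGraph (Fin m)) H) ≤ m * chiLD H ∧
    ∀ f : V → ℕ, IsLDAL H f →
      (Finset.univ.image (ldWeight H f)).card = chiLD H →
      ∀ (j : Fin m) (y : V),
        2 * (ldWeight (lexProd (⊤ : SimpleGraph (Fin m)) H)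
              (fun p => f p.2 + (p.1 : ℕ) * n) (j, y) + (j : ℕ) * n * (n - r)) =
          n * (m - 1) * (n * m + n + 1) + 2 * ldWeight H f y :=
  stmt_18_general H m n r hcard hreg hex
end
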